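/- Let T be a bounded linear operator on the space M(Ω) of finite signed Borel measures on a Polish space Ω. Then T is given by a bounded transition kernel k via (Tμ)(A) = ∫ k(x,A) dμ(x) if and only if the norm adjoint T* maps the space B_b(Ω) of bounded Borel measurable functions (embedded in M(Ω)*) into itself. -/

import Mathlib

open MeasureTheory Topology Filter
open scoped NNReal ENNReal BoundedContinuousFunction

noncomputable def sInt {Ω : Type*} [MeasurableSpace Ω] (μ : SignedMeasure Ω) (f : Ω → ℝ) : ℝ :=
  (∫ x, f x ∂μ.toJordanDecomposition.posPart) - ∫ x, f x ∂μ.toJordanDecomposition.negPart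

def IsTransKernel {Ω : Type*} [MeasurableSpace Ω] (k : Ω → SignedMeasure Ω) : Prop :=
  ∀ A : Set Ω, MeasurableSet A → Measurable fun x => k x A

def IsBddKernel {Ω : Type*} [MeasurableSpace Ω] (k : Ω → SignedMeasure Ω) : Prop :=
  IsTransKernel k ∧ ∃ C : ℝ≥0, ∀ x, (k x).totalVariation Set.univ ≤ C

def GivenByKernel {Ω : Type*} [MeasurableSpace Ω]
    (T : SignedMeasure Ω →ₗ[ℝ] SignedMeasure Ω) (k : Ω → SignedMeasure Ω) : Prop :=
  ∀ (μ : SignedMeasure Ω) (A : Set Ω), MeasurableSet A → T μ A = sInt μ (fun x => k x A)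

def IsBdMeasurable {Ω : Type*} [MeasurableSpace Ω] (f : Ω → ℝ) : Prop :=
  Measurable f ∧ ∃ C : ℝ, ∀ x, |f x| ≤ C

instance totalVariation_isFiniteMeasure {Ω : Type*} [MeasurableSpace Ω] (μ : SignedMeasure Ω) :
    IsFiniteMeasure μ.totalVariation := by
  unfold SignedMeasure.totalVariation; infer_instance

/-! A bounded kernel `k` acts on bounded measurable functions by `f ↦ (x ↦ ∫ f d(k x))`, and
`∫ f d(Tμ) = ∫ (x ↦ ∫ f d(k x)) dμ` holds for indicators, hence for simple functions by
linearity and for all bounded measurable `f` by dominated convergence. Conversely, if `T*`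
preserves bounded measurable functions, then `x ↦ (T δₓ)(A)` is the bounded measurable function
`T* 1_A` (evaluate `T* 1_A` against `δₓ`), so `x ↦ T δₓ` is a bounded kernel representing `T`,
with `‖T δₓ‖ ≤ ‖T‖`. -/

open Set

section

variable {Ω : Type*} [MeasurableSpace Ω]

namespace IsBdMeasurable

lemma exists_nonneg_bound {f : Ω → ℝ} (hf : IsBdMeasurable f) :
    ∃ C, 0 ≤ C ∧ ∀ x, |f x| ≤ C := by
  obtain ⟨-, C, hC⟩ := hf
  exact ⟨max C 0, le_max_right _ _, fun x => (hC x).trans (le_max_left _ _)⟩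

lemma integrable {f : Ω → ℝ} (hf : IsBdMeasurable f) (ν : Measure Ω) [IsFiniteMeasure ν] :
    Integrable f ν := by
  obtain ⟨hm, C, hC⟩ := hf
  exact ⟨hm.aestronglyMeasurable, HasFiniteIntegral.of_bounded (.of_forall hC)⟩

lemma indicator_const {s : Set Ω} (hs : MeasurableSet s) (c : ℝ) :
    IsBdMeasurable (s.indicator fun _ => c) :=
  ⟨measurable_const.indicator hs, |c|, fun x => by
    by_cases hx : x ∈ s <;> simp [hx]⟩

end IsBdMeasurable

lemma MeasureTheory.SimpleFunc.isBdMeasurable (φ : SimpleFunc Ω ℝ) : IsBdMeasurable φ :=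
  ⟨φ.measurable, φ.exists_forall_norm_le⟩

theorem IsBdMeasurable.induction {P : (Ω → ℝ) → Prop}
    (indicator : ∀ (c : ℝ) (s : Set Ω), MeasurableSet s → P (s.indicator fun _ => c))
    (add : ∀ f g : Ω → ℝ, IsBdMeasurable f → IsBdMeasurable g → P f → P g → P (f + g))
    (lim : ∀ (F : ℕ → Ω → ℝ) (f : Ω → ℝ) (B : ℝ), (∀ n, IsBdMeasurable (F n)) →
      IsBdMeasurable f → 0 ≤ B → (∀ n x, |F n x| ≤ B) →
      (∀ x, Tendsto (F · x) atTop (𝓝 (f x))) → (∀ n, P (F n)) → P f)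
    {f : Ω → ℝ} (hf : IsBdMeasurable f) : P f := by
  have simple (φ : SimpleFunc Ω ℝ) : P φ := by
    induction φ using SimpleFunc.induction with
    | @const c s hs =>
      convert indicator c s hs using 1
      ext x
      by_cases hx : x ∈ s <;> simp [hx]
    | @add φ ψ _ hφ hψ =>
      rw [SimpleFunc.coe_add]
      exact add φ ψ φ.isBdMeasurable ψ.isBdMeasurable hφ hψ
  obtain ⟨C, hC0, hC⟩ := hf.exists_nonneg_bound
  let F n := SimpleFunc.approxOn f hf.1 univ 0 (mem_univ 0) n
  exact lim (F ·) f (C + C) (fun n => (F n).isBdMeasurable) hf (add_nonneg hC0 hC0)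
    (fun n x => (SimpleFunc.norm_approxOn_zero_le hf.1 (mem_univ 0) x n).trans
      (add_le_add (hC x) (hC x)))
    (fun x => SimpleFunc.tendsto_approxOn hf.1 (mem_univ 0) (by simp)) (fun n => simple (F n))

namespace MeasureTheory.SignedMeasure

lemma apply_eq_posPart_sub_negPart (μ : SignedMeasure Ω) {A : Set Ω} (hA : MeasurableSet A) :
    μ A = μ.toJordanDecomposition.posPart.real A - μ.toJordanDecomposition.negPart.real A := by
  conv_lhs => rw [← μ.toSignedMeasure_toJordanDecomposition]
  rw [JordanDecomposition.toSignedMeasure, _root_.sub_apply,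
    Measure.toSignedMeasure_apply_measurable hA, Measure.toSignedMeasure_apply_measurable hA]

lemma toJordanDecomposition_toSignedMeasure (ν : Measure Ω) [IsFiniteMeasure ν] :
    ν.toSignedMeasure.toJordanDecomposition = ⟨ν, 0, .zero_right⟩ := by
  rw [← JordanDecomposition.toJordanDecomposition_toSignedMeasure ⟨ν, 0, .zero_right⟩]
  simp [JordanDecomposition.toSignedMeasure, Measure.toSignedMeasure_zero]

lemma totalVariation_toSignedMeasure (ν : Measure Ω) [IsFiniteMeasure ν] :
    ν.toSignedMeasure.totalVariation = ν := by
  simp [totalVariation, toJordanDecomposition_toSignedMeasure]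

end MeasureTheory.SignedMeasure

lemma sInt_toSignedMeasure (ν : Measure Ω) [IsFiniteMeasure ν] (f : Ω → ℝ) :
    sInt ν.toSignedMeasure f = ∫ x, f x ∂ν := by
  simp [sInt, SignedMeasure.toJordanDecomposition_toSignedMeasure]

lemma sInt_dirac (x : Ω) {f : Ω → ℝ} (hf : Measurable f) :
    sInt (Measure.dirac x).toSignedMeasure f = f x := by
  rw [sInt_toSignedMeasure, integral_dirac' f x hf.stronglyMeasurable]

lemma sInt_indicator_const (μ : SignedMeasure Ω) {A : Set Ω} (hA : MeasurableSet A) (c : ℝ) :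
    sInt μ (A.indicator fun _ => c) = c * μ A := by
  rw [sInt, integral_indicator_const c hA, integral_indicator_const c hA,
    SignedMeasure.apply_eq_posPart_sub_negPart μ hA, smul_eq_mul, smul_eq_mul]
  ring

lemma sInt_const_mul (μ : SignedMeasure Ω) (c : ℝ) (f : Ω → ℝ) :
    sInt μ (fun x => c * f x) = c * sInt μ f := by
  rw [sInt, integral_const_mul, integral_const_mul, sInt, mul_sub]

lemma sInt_add (μ : SignedMeasure Ω) {f g : Ω → ℝ} (hf : IsBdMeasurable f)
    (hg : IsBdMeasurable g) : sInt μ (f + g) = sInt μ f + sInt μ g := by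
  simp only [sInt, Pi.add_apply]
  rw [integral_add (hf.integrable _) (hg.integrable _),
    integral_add (hf.integrable _) (hg.integrable _)]
  ring

lemma abs_sInt_le (μ : SignedMeasure Ω) {f : Ω → ℝ} {B : ℝ} {C : ℝ≥0} (hB : 0 ≤ B)
    (hf : ∀ x, |f x| ≤ B) (hμ : μ.totalVariation univ ≤ C) : |sInt μ f| ≤ B * C := by
  set P := μ.toJordanDecomposition.posPart
  set N := μ.toJordanDecomposition.negPart
  have hPN : P.real univ + N.real univ ≤ C := by
    rw [measureReal_def, measureReal_def, ← ENNReal.toReal_add (measure_ne_top _ _)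
      (measure_ne_top _ _)]
    exact ENNReal.toReal_le_coe_of_le_coe hμ
  calc |sInt μ f| ≤ ‖∫ x, f x ∂P‖ + ‖∫ x, f x ∂N‖ := abs_sub _ _
    _ ≤ B * P.real univ + B * N.real univ :=
      add_le_add (norm_integral_le_of_norm_le_const (.of_forall hf))
        (norm_integral_le_of_norm_le_const (.of_forall hf))
    _ ≤ B * C := by rw [← mul_add]; exact mul_le_mul_of_nonneg_left hPN hB

lemma tendsto_sInt (μ : SignedMeasure Ω) {F : ℕ → Ω → ℝ} {f : Ω → ℝ} {B : ℝ}
    (hF : ∀ n, Measurable (F n)) (hB : ∀ n x, |F n x| ≤ B)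
    (hlim : ∀ x, Tendsto (F · x) atTop (𝓝 (f x))) :
    Tendsto (fun n => sInt μ (F n)) atTop (𝓝 (sInt μ f)) := by
  have (ν : Measure Ω) [IsFiniteMeasure ν] :
      Tendsto (fun n => ∫ x, F n x ∂ν) atTop (𝓝 (∫ x, f x ∂ν)) :=
    tendsto_integral_of_dominated_convergence (fun _ => B)
      (fun n => (hF n).aestronglyMeasurable) (integrable_const B)
      (fun n => .of_forall (hB n)) (.of_forall hlim)
  exact (this _).sub (this _)

section Kernel

variable {k : Ω → SignedMeasure Ω}

lemma IsTransKernel.measurable_sInt (hk : IsTransKernel k) {f : Ω → ℝ}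
    (hf : IsBdMeasurable f) : Measurable fun x => sInt (k x) f := by
  refine IsBdMeasurable.induction (P := fun f => Measurable fun x => sInt (k x) f)
    (fun c s hs => ?_) (fun f g hf hg hPf hPg => ?_)
    (fun F f B hF _ _ hB hlim hPF => ?_) hf
  · simp_rw [sInt_indicator_const _ hs]
    exact (hk _ hs).const_mul c
  · simp_rw [sInt_add _ hf hg]
    exact hPf.add hPg
  · exact measurable_of_tendsto_metrizable hPF
      (tendsto_pi_nhds.2 fun x => tendsto_sInt (k x) (fun n => (hF n).1) hB hlim)

lemma IsBddKernel.isBdMeasurable_sInt (hk : IsBddKernel k) {f : Ω → ℝ}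
    (hf : IsBdMeasurable f) : IsBdMeasurable fun x => sInt (k x) f := by
  obtain ⟨B, hB0, hB⟩ := hf.exists_nonneg_bound
  obtain ⟨C, hC⟩ := hk.2
  exact ⟨hk.1.measurable_sInt hf, B * C, fun x => abs_sInt_le (k x) hB0 hB (hC x)⟩

lemma GivenByKernel.sInt_apply {T : SignedMeasure Ω →ₗ[ℝ] SignedMeasure Ω}
    (hT : GivenByKernel T k) (hk : IsBddKernel k) {f : Ω → ℝ} (hf : IsBdMeasurable f)
    (μ : SignedMeasure Ω) : sInt (T μ) f = sInt μ fun x => sInt (k x) f := by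
  revert μ
  refine IsBdMeasurable.induction
    (P := fun f => ∀ μ, sInt (T μ) f = sInt μ fun x => sInt (k x) f)
    (fun c s hs μ => ?_) (fun f g hf hg hPf hPg μ => ?_)
    (fun F f B hF _ hB0 hB hlim hPF μ => ?_) hf
  · simp_rw [sInt_indicator_const _ hs, hT μ s hs, sInt_const_mul]
  · simp_rw [sInt_add _ hf hg]
    rw [hPf, hPg, ← sInt_add μ (hk.isBdMeasurable_sInt hf) (hk.isBdMeasurable_sInt hg)]
    rfl
  · obtain ⟨C, hC⟩ := hk.2
    have hTF : Tendsto (fun n => sInt (T μ) (F n)) atTop (𝓝 (sInt (T μ) f)) :=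
      tendsto_sInt _ (fun n => (hF n).1) hB hlim
    have hkF : Tendsto (fun n => sInt μ fun x => sInt (k x) (F n)) atTop
        (𝓝 (sInt μ fun x => sInt (k x) f)) :=
      tendsto_sInt μ (fun n => (hk.isBdMeasurable_sInt (hF n)).1)
        (fun n x => abs_sInt_le (k x) hB0 (hB n) (hC x))
        (fun x => tendsto_sInt (k x) (fun n => (hF n).1) hB hlim)
    simp only [hPF] at hTF
    exact tendsto_nhds_unique hTF hkF

end Kernel

/-- The norm adjoint `T*` maps `B_b(Ω) ⊆ M(Ω)*` into itself. -/
def AdjointPreservesBdMeasurable (T : SignedMeasure Ω →ₗ[ℝ] SignedMeasure Ω) : Prop :=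
  ∀ f : Ω → ℝ, IsBdMeasurable f →
    ∃ g : Ω → ℝ, IsBdMeasurable g ∧ ∀ μ : SignedMeasure Ω, sInt (T μ) f = sInt μ g

noncomputable def diracKernel (T : SignedMeasure Ω →ₗ[ℝ] SignedMeasure Ω) (x : Ω) :
    SignedMeasure Ω :=
  T (Measure.dirac x).toSignedMeasure

lemma diracKernel_apply_eq {T : SignedMeasure Ω →ₗ[ℝ] SignedMeasure Ω} {A : Set Ω} {g : Ω → ℝ}
    (hg : Measurable g) (hTg : ∀ μ, T μ A = sInt μ g) : (fun x => diracKernel T x A) = g :=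
  funext fun x => (hTg _).trans (sInt_dirac x hg)

namespace AdjointPreservesBdMeasurable

variable {T : SignedMeasure Ω →ₗ[ℝ] SignedMeasure Ω}

lemma exists_apply_eq_sInt (hT : AdjointPreservesBdMeasurable T) {A : Set Ω}
    (hA : MeasurableSet A) : ∃ g, IsBdMeasurable g ∧ ∀ μ, T μ A = sInt μ g := by
  obtain ⟨g, hg, hTg⟩ := hT _ (IsBdMeasurable.indicator_const hA 1)
  simp only [sInt_indicator_const _ hA, one_mul] at hTg
  exact ⟨g, hg, hTg⟩

lemma givenByKernel_diracKernel (hT : AdjointPreservesBdMeasurable T) :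
    GivenByKernel T (diracKernel T) := fun μ _ hA => by
  obtain ⟨g, hg, hTg⟩ := hT.exists_apply_eq_sInt hA
  rw [diracKernel_apply_eq hg.1 hTg]
  exact hTg μ

lemma isBddKernel_diracKernel (hT : AdjointPreservesBdMeasurable T) {C : ℝ≥0}
    (hC : ∀ μ : SignedMeasure Ω, (T μ).totalVariation univ ≤ C * μ.totalVariation univ) :
    IsBddKernel (diracKernel T) := by
  refine ⟨fun _ hA => ?_, C, fun x => ?_⟩
  · obtain ⟨g, hg, hTg⟩ := hT.exists_apply_eq_sInt hA
    exact diracKernel_apply_eq hg.1 hTg ▸ hg.1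
  · simpa [diracKernel, SignedMeasure.totalVariation_toSignedMeasure]
      using hC (Measure.dirac x).toSignedMeasure

end AdjointPreservesBdMeasurable

end

theorem stmt5_general {Ω : Type*} [MeasurableSpace Ω]
    (T : SignedMeasure Ω →ₗ[ℝ] SignedMeasure Ω)
    (hT : ∃ C : ℝ≥0, ∀ μ : SignedMeasure Ω,
      (T μ).totalVariation Set.univ ≤ C * μ.totalVariation Set.univ) :
    (∃ k : Ω → SignedMeasure Ω, IsBddKernel k ∧ GivenByKernel T k) ↔
      ∀ f : Ω → ℝ, IsBdMeasurable f →
        ∃ g : Ω → ℝ, IsBdMeasurable g ∧ ∀ μ : SignedMeasure Ω, sInt (T μ) f = sInt μ g := by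
  constructor
  · rintro ⟨k, hk, hTk⟩ f hf
    exact ⟨_, hk.isBdMeasurable_sInt hf, hTk.sInt_apply hk hf⟩
  · intro (hdual : AdjointPreservesBdMeasurable T)
    obtain ⟨C, hC⟩ := hT
    exact ⟨diracKernel T, hdual.isBddKernel_diracKernel hC, hdual.givenByKernel_diracKernel⟩

theorem stmt5 {Ω : Type*} [TopologicalSpace Ω] [PolishSpace Ω] [MeasurableSpace Ω] [BorelSpace Ω]
    (T : SignedMeasure Ω →ₗ[ℝ] SignedMeasure Ω)
    (hT : ∃ C : ℝ≥0, ∀ μ : SignedMeasure Ω,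
      (T μ).totalVariation Set.univ ≤ C * μ.totalVariation Set.univ) :
    (∃ k : Ω → SignedMeasure Ω, IsBddKernel k ∧ GivenByKernel T k) ↔
      ∀ f : Ω → ℝ, IsBdMeasurable f →
        ∃ g : Ω → ℝ, IsBdMeasurable g ∧ ∀ μ : SignedMeasure Ω, sInt (T μ) f = sInt μ g :=
  stmt5_general T hT
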